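/- The twisted Cayley transform C_κ(y) = (1 - y(1-κ))/(1 + y(1+κ)) intertwines the product a •_κ b = (a+b+2abκ)/(1+ab(1-κ²)) with multiplication: C_κ(a •_κ b) = C_κ(a)·C_κ(b), whenever 1+a(1+κ) ≠ 0, 1+b(1+κ) ≠ 0, 1+ab(1-κ²) ≠ 0, and 1 + (a •_κ b)(1+κ) ≠ 0. -/

import Mathlib

/-- The broken product `a •_κ b = (a+b+2abκ)/(1+ab(1-κ²))`. -/
noncomputable def bulletK (κ a b : ℂ) : ℂ :=
  (a + b + 2 * a * b * κ) / (1 + a * b * (1 - κ ^ 2))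

/-- The twisted Cayley transform `C_κ(y) = (1-y(1-κ))/(1+y(1+κ))`. -/
noncomputable def CayleyK (κ y : ℂ) : ℂ := (1 - y * (1 - κ)) / (1 + y * (1 + κ))

/-!
Applied to a fraction `n / d`, the Cayley transform is `(d - n(1-κ)) / (d + n(1+κ))`.
For `n / d = a •_κ b` both of these factor, because `1 - κ² + 2κ(1 ± κ) = (1 ± κ)²`:
they are `(1 - a(1-κ))(1 - b(1-κ))` and `(1 + a(1+κ))(1 + b(1+κ))`.
-/

section Factorization

variable {R : Type*} [CommRing R] (κ a b : R)

theorem bulletK_denom_sub_num_mul :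
    1 + a * b * (1 - κ ^ 2) - (a + b + 2 * a * b * κ) * (1 - κ) =
      (1 - a * (1 - κ)) * (1 - b * (1 - κ)) := by
  ring

theorem bulletK_denom_add_num_mul :
    1 + a * b * (1 - κ ^ 2) + (a + b + 2 * a * b * κ) * (1 + κ) =
      (1 + a * (1 + κ)) * (1 + b * (1 + κ)) := by
  ring

end Factorization

theorem CayleyK_div (κ n d : ℂ) (hd : d ≠ 0) :
    CayleyK κ (n / d) = (d - n * (1 - κ)) / (d + n * (1 + κ)) := by
  rw [CayleyK, div_mul_eq_mul_div, div_mul_eq_mul_div, one_sub_div hd, one_add_div hd,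
    div_div_div_cancel_right₀ hd]

theorem CayleyK_intertwines_general (κ a b : ℂ)
    (hab : 1 + a * b * (1 - κ ^ 2) ≠ 0) :
    CayleyK κ (bulletK κ a b) = CayleyK κ a * CayleyK κ b := by
  rw [bulletK, CayleyK_div κ _ _ hab, bulletK_denom_sub_num_mul, bulletK_denom_add_num_mul,
    mul_div_mul_comm]
  rfl

/-- `C_κ` intertwines `•_κ` with multiplication. -/
theorem CayleyK_intertwines (κ a b : ℂ)
    (ha : 1 + a * (1 + κ) ≠ 0) (hb : 1 + b * (1 + κ) ≠ 0)
    (hab : 1 + a * b * (1 - κ ^ 2) ≠ 0)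
    (hbul : 1 + bulletK κ a b * (1 + κ) ≠ 0) :
    CayleyK κ (bulletK κ a b) = CayleyK κ a * CayleyK κ b :=
  CayleyK_intertwines_general κ a b hab
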